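/- arXiv:cs/9901016 — 2 statements merged into one kernel-verified Lean document; each statement's English description precedes it below -/
import Mathlib

section
/- For every normal default theory Δ over a propositional language L there exists a default theory Δ' over L that is both normal and prerequisite-free and is equivalent to Δ, i.e., ext(Δ') = ext(Δ). -/
/-- Propositional formulas over a set of atoms `α`. -/
inductive PropForm (α : Type) : Type
  | atom : α → PropForm α
  | fls  : PropForm α
  | impl : PropForm α → PropForm α → PropForm α

namespace PropForm

/-- Negation `¬φ`, definable as `φ → ⊥`. -/
def neg {α : Type} (φ : PropForm α) : PropForm α := impl φ fls

/-- Conjunction, definable from implication and falsum. -/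
def conj {α : Type} (φ ψ : PropForm α) : PropForm α := (φ.impl ψ.neg).neg

/-- Biimplication `φ ↔ ψ`. -/
def biimp {α : Type} (φ ψ : PropForm α) : PropForm α := conj (φ.impl ψ) (ψ.impl φ)

/-- Evaluation of a formula under a valuation of the atoms. -/
def eval {α : Type} (v : α → Prop) : PropForm α → Prop
  | atom a   => v a
  | fls      => False
  | impl φ ψ => eval v φ → eval v ψ

/-- Renaming/embedding of atoms. -/
def map {α β : Type} (f : α → β) : PropForm α → PropForm β
  | atom a   => atom (f a)
  | fls      => fls
  | impl φ ψ => impl (map f φ) (map f ψ)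

end PropForm

/-- Classical propositional consequence operator. -/
def Cn {α : Type} (S : Set (PropForm α)) : Set (PropForm α) :=
  {φ | ∀ v : α → Prop, (∀ ψ ∈ S, ψ.eval v) → φ.eval v}

/-- A theory: a set of formulas closed under propositional consequence. -/
def IsTheory {α : Type} (S : Set (PropForm α)) : Prop := Cn S ⊆ S

/-- A set of formulas is consistent if its consequences are not the whole language. -/
def Consistent {α : Type} (S : Set (PropForm α)) : Prop := Cn S ≠ Set.univ

/-- A default `α : Γ / β` with prerequisite, finite set of justifications, consequent. -/
structure Default (α : Type) where
  pre : PropForm α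
  jus : Finset (PropForm α)
  con : PropForm α

/-- A default is applicable w.r.t. `S` if no justification's negation follows from `S`. -/
def Default.Applicable {α : Type} (S : Set (PropForm α)) (d : Default α) : Prop :=
  ∀ γ ∈ d.jus, γ.neg ∉ Cn S

/-- The reduct of `D` w.r.t. `S`: the monotone rules `pre/con` of `S`-applicable defaults. -/
def Reduct {α : Type} (D : Set (Default α)) (S : Set (PropForm α)) :
    Set (PropForm α × PropForm α) :=
  {r | ∃ d ∈ D, d.Applicable S ∧ r = (d.pre, d.con)}

/-- `Cn^B(W)`: consequences of `W` in propositional calculus augmented with rules `B`;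
the least set containing `W`, closed under `Cn`, and closed under the rules of `B`. -/
def CnRules {α : Type} (B : Set (PropForm α × PropForm α)) (W : Set (PropForm α)) :
    Set (PropForm α) :=
  ⋂₀ {S | W ⊆ S ∧ Cn S ⊆ S ∧ ∀ r ∈ B, r.1 ∈ S → r.2 ∈ S}

/-- `S` is an extension of the default theory `(D, W)`. -/
def IsExtension {α : Type} (D : Set (Default α)) (W S : Set (PropForm α)) : Prop :=
  S = CnRules (Reduct D S) W

/-- The family of all extensions of `(D, W)`. -/
def ext {α : Type} (D : Set (Default α)) (W : Set (PropForm α)) : Set (Set (PropForm α)) :=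
  {S | IsExtension D W S}

/-- A default is prerequisite-free if its prerequisite is a tautology. -/
def Default.PrereqFree {α : Type} (d : Default α) : Prop :=
  d.pre ∈ Cn (∅ : Set (PropForm α))

/-- A default is normal if it has the form `α : {β} / β`. -/
def Default.Normal {α : Type} (d : Default α) : Prop := d.jus = {d.con}

/-!
Call `c` grounded if it is the conjunction of the consequents of a sequence of defaults
`d₁, …, dₙ ∈ D` in which every prerequisite follows from `W` and the earlier consequents. For
normal `D`, `S` is an extension of `(D, W)` iff `S = Cn (W ∪ {c grounded | ¬c ∉ Cn S})`:
normality makes a grounded sequence applicable as soon as its conjunction is consistent with `S`,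
and compactness lets each rule application draw on a single grounded conjunction. The same
fixed-point equation characterises the extensions of the prerequisite-free normal theory with
facts `W` and the defaults `⊤ : c / c`, `c` grounded.
-/

namespace PropForm

variable {α : Type}

def top : PropForm α := neg fls

@[simp]
lemma eval_top (v : α → Prop) : (top : PropForm α).eval v := id

@[simp]
lemma eval_neg (v : α → Prop) (φ : PropForm α) : φ.neg.eval v ↔ ¬φ.eval v := Iff.rfl

@[simp]
lemma eval_conj (v : α → Prop) (φ ψ : PropForm α) : (φ.conj ψ).eval v ↔ φ.eval v ∧ ψ.eval v := by
  simp only [conj, eval_neg, eval]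
  tauto

end PropForm

open PropForm

section Consequence

variable {α : Type}

lemma subset_Cn (X : Set (PropForm α)) : X ⊆ Cn X :=
  fun φ hφ _ hv => hv φ hφ

lemma Cn_subset_Cn {X Y : Set (PropForm α)} (h : X ⊆ Cn Y) : Cn X ⊆ Cn Y :=
  fun _ hφ v hv => hφ v fun _ hψ => h hψ v hv

lemma Cn_mono {X Y : Set (PropForm α)} (h : X ⊆ Y) : Cn X ⊆ Cn Y :=
  Cn_subset_Cn (h.trans (subset_Cn Y))

lemma Cn_union_subset_of_subset_Cn {X Y Z : Set (PropForm α)} (h : Z ⊆ Cn Y) :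
    Cn (X ∪ Z) ⊆ Cn (X ∪ Y) :=
  Cn_subset_Cn (Set.union_subset (Set.subset_union_left.trans (subset_Cn _))
    (h.trans (Cn_mono Set.subset_union_right)))

lemma top_mem_Cn (X : Set (PropForm α)) : (top : PropForm α) ∈ Cn X :=
  fun v _ => eval_top v

lemma neg_notMem_Cn_iff {S : Set (PropForm α)} {φ : PropForm α} :
    φ.neg ∉ Cn S ↔ ∃ v, (∀ ψ ∈ S, ψ.eval v) ∧ φ.eval v := by
  simp [Cn]

end Consequence

section Compactness

variable {α : Type}

lemma isClopen_setOf_eval (φ : PropForm α) : IsClopen {b : α → Bool | φ.eval (b · = true)} := by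
  induction φ with
  | atom a => exact (isClopen_discrete {true}).preimage (continuous_apply a)
  | fls => exact isClopen_empty
  | impl φ ψ ihφ ihψ =>
    have h : {b : α → Bool | (φ.impl ψ).eval (b · = true)}
        = {b | φ.eval (b · = true)}ᶜ ∪ {b | ψ.eval (b · = true)} := by
      ext b
      simp only [eval, Set.mem_ofPred_eq, Set.mem_union, Set.mem_compl_iff, imp_iff_not_or]
    rw [h]
    exact ihφ.compl.union ihψ

/-- Compactness of propositional consequence, via compactness of the Cantor space `α → Bool`. -/
lemma exists_finset_of_mem_Cn_union {X Y : Set (PropForm α)} {φ : PropForm α}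
    (h : φ ∈ Cn (X ∪ Y)) : ∃ F : Finset (PropForm α), ↑F ⊆ Y ∧ φ ∈ Cn (X ∪ ↑F) := by
  classical
  set M : PropForm α → Set (α → Bool) := fun ψ => {b | ψ.eval (b · = true)}
  have hM : ∀ ψ, IsClosed (M ψ) := fun ψ => (isClopen_setOf_eval ψ).isClosed
  have hcompact : IsCompact (M φ.neg ∩ ⋂ ψ ∈ X, M ψ) :=
    ((hM _).inter (isClosed_biInter fun ψ _ => hM ψ)).isCompact
  have hempty : (M φ.neg ∩ ⋂ ψ ∈ X, M ψ) ∩ ⋂ ψ : Y, M ψ = ∅ := by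
    refine Set.eq_empty_of_forall_notMem fun b ⟨⟨hφ, hX⟩, hY⟩ => hφ (h _ ?_)
    rintro ψ (hψ | hψ)
    · exact Set.mem_iInter₂.1 hX ψ hψ
    · exact Set.mem_iInter.1 hY ⟨ψ, hψ⟩
  obtain ⟨u, hu⟩ := hcompact.elim_finite_subfamily_closed (fun ψ : Y => M ψ) (fun ψ => hM ψ) hempty
  refine ⟨u.map (Function.Embedding.subtype _), by simp, fun v hv => ?_⟩
  have hb : (fun a => decide (v a) = true) = v := funext fun a => propext decide_eq_true_iff
  by_contra hφ
  refine Set.eq_empty_iff_forall_notMem.1 hu (fun a => decide (v a)) ⟨⟨?_, ?_⟩, ?_⟩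
  · simpa [M, hb] using hφ
  · simpa [M, hb] using fun ψ hψ => hv ψ (Or.inl hψ)
  · simpa [M, hb] using fun ψ hψ hu => hv ψ (Or.inr (by simpa using ⟨hψ, hu⟩))

end Compactness

section RuleClosure

variable {α : Type} {B : Set (PropForm α × PropForm α)} {W T X : Set (PropForm α)}

structure RuleClosed (B : Set (PropForm α × PropForm α)) (W T : Set (PropForm α)) : Prop where
  subset : W ⊆ T
  Cn_subset : Cn T ⊆ T
  rule_mem : ∀ r ∈ B, r.1 ∈ T → r.2 ∈ T

lemma CnRules_subset (hT : RuleClosed B W T) : CnRules B W ⊆ T :=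
  Set.sInter_subset_of_mem ⟨hT.subset, hT.Cn_subset, hT.rule_mem⟩

lemma ruleClosed_CnRules (B : Set (PropForm α × PropForm α)) (W : Set (PropForm α)) :
    RuleClosed B W (CnRules B W) where
  subset _ hφ := Set.mem_sInter.2 fun _ hT => hT.1 hφ
  Cn_subset _ hφ := Set.mem_sInter.2 fun _ hT => hT.2.1 (Cn_mono (Set.sInter_subset_of_mem hT) hφ)
  rule_mem r hr h := Set.mem_sInter.2 fun T hT => hT.2.2 r hr (Set.mem_sInter.1 h T hT)

lemma RuleClosed.Cn_subset_of_subset (hT : RuleClosed B W T) (h : X ⊆ T) : Cn X ⊆ T :=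
  (Cn_mono h).trans hT.Cn_subset

lemma ruleClosed_Cn_union (hB : ∀ r ∈ B, r.1 ∈ Cn (W ∪ X) → r.2 ∈ Cn (W ∪ X)) :
    RuleClosed B W (Cn (W ∪ X)) where
  subset := Set.subset_union_left.trans (subset_Cn _)
  Cn_subset := Cn_subset_Cn subset_rfl
  rule_mem := hB

end RuleClosure

section Supernormal

variable {α : Type}

/-- The prerequisite-free normal default `⊤ : c / c`. -/
def Default.supernormal (c : PropForm α) : Default α := ⟨top, {c}, c⟩

lemma Default.Normal.applicable_iff {d : Default α} (hd : d.Normal) {S : Set (PropForm α)} :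
    d.Applicable S ↔ d.con.neg ∉ Cn S := by
  simp only [Default.Applicable, show d.jus = {d.con} from hd, Finset.mem_singleton, forall_eq]

lemma CnRules_reduct_supernormal (C W S : Set (PropForm α)) :
    CnRules (Reduct (Default.supernormal '' C) S) W = Cn (W ∪ {c ∈ C | c.neg ∉ Cn S}) := by
  have happ : ∀ c, (Default.supernormal c).Applicable S ↔ c.neg ∉ Cn S :=
    fun c => Default.Normal.applicable_iff (d := Default.supernormal c) rfl
  refine (CnRules_subset (ruleClosed_Cn_union ?_)).antisymm ?_
  · rintro _ ⟨_, ⟨c, hc, rfl⟩, hS, rfl⟩ -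
    exact subset_Cn _ (Or.inr ⟨hc, (happ c).1 hS⟩)
  · have hT := ruleClosed_CnRules (Reduct (Default.supernormal '' C) S) W
    refine hT.Cn_subset_of_subset (Set.union_subset hT.subset ?_)
    rintro c ⟨hc, hS⟩
    exact hT.rule_mem (top, c) ⟨_, ⟨c, hc, rfl⟩, (happ c).2 hS, rfl⟩ (hT.Cn_subset (top_mem_Cn _))

end Supernormal

section Grounded

variable {α : Type} {D : Set (Default α)} {W S T : Set (PropForm α)}

inductive Grounded (D : Set (Default α)) (W : Set (PropForm α)) : PropForm α → Prop
  | top : Grounded D W top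
  | snoc {c : PropForm α} {d : Default α} :
      Grounded D W c → d ∈ D → d.pre ∈ Cn (W ∪ {c}) → Grounded D W (c.conj d.con)

lemma Grounded.exists_conj {c₁ c₂ : PropForm α} (h₁ : Grounded D W c₁) (h₂ : Grounded D W c₂) :
    ∃ c, Grounded D W c ∧ ∀ v, c.eval v ↔ c₁.eval v ∧ c₂.eval v := by
  induction h₂ with
  | top => exact ⟨c₁, h₁, by simp⟩
  | @snoc c₂ d _ hd hpre ih =>
    obtain ⟨c, hc, hiff⟩ := ih
    have hentails : {c₂} ⊆ Cn {c} :=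
      Set.singleton_subset_iff.2 fun v hv => ((hiff v).1 (hv c rfl)).2
    exact ⟨c.conj d.con, hc.snoc hd (Cn_union_subset_of_subset_Cn hentails hpre),
      by simp [hiff, and_assoc]⟩

lemma exists_grounded_eval_iff (F : Finset (PropForm α)) (hF : ∀ ψ ∈ F, Grounded D W ψ) :
    ∃ c, Grounded D W c ∧ ∀ v, c.eval v ↔ ∀ ψ ∈ F, ψ.eval v := by
  classical
  induction F using Finset.induction_on with
  | empty => exact ⟨top, .top, by simp⟩
  | insert ψ F _ ih =>
    obtain ⟨c, hc, hiff⟩ := ih fun φ hφ => hF φ (Finset.mem_insert_of_mem hφ)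
    obtain ⟨c', hc', hiff'⟩ := (hF ψ (Finset.mem_insert_self ψ F)).exists_conj hc
    exact ⟨c', hc', by simp [hiff', hiff]⟩

lemma Grounded.mem_of_ruleClosed (hD : ∀ d ∈ D, d.Normal) (hT : RuleClosed (Reduct D S) W T)
    {v : α → Prop} (hS : ∀ ψ ∈ S, ψ.eval v) {c : PropForm α} (hc : Grounded D W c)
    (hcv : c.eval v) : c ∈ T := by
  induction hc with
  | top => exact hT.Cn_subset (top_mem_Cn T)
  | @snoc c d _ hd hpre ih =>
    rw [eval_conj] at hcv
    have hcT : c ∈ T := ih hcv.1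
    have hpreT : d.pre ∈ T :=
      hT.Cn_subset_of_subset (Set.union_subset hT.subset (Set.singleton_subset_iff.2 hcT)) hpre
    have happ : d.Applicable S := (hD d hd).applicable_iff.2 (neg_notMem_Cn_iff.2 ⟨v, hS, hcv.2⟩)
    have hconT : d.con ∈ T := hT.rule_mem _ ⟨d, hd, happ, rfl⟩ hpreT
    exact hT.Cn_subset_of_subset (Set.pair_subset hcT hconT)
      fun u hu => (eval_conj u c d.con).2 ⟨hu c (by simp), hu d.con (by simp)⟩

def consistentGrounded (D : Set (Default α)) (W S : Set (PropForm α)) : Set (PropForm α) :=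
  {c | Grounded D W c ∧ c.neg ∉ Cn S}

lemma consistentGrounded_subset (hD : ∀ d ∈ D, d.Normal) (hT : RuleClosed (Reduct D S) W T) :
    consistentGrounded D W S ⊆ T := fun _ ⟨hc, hcS⟩ =>
  let ⟨_, hS, hcv⟩ := neg_notMem_Cn_iff.1 hcS
  hc.mem_of_ruleClosed hD hT hS hcv

lemma ruleClosed_Cn_union_consistentGrounded (hD : ∀ d ∈ D, d.Normal)
    (hA : consistentGrounded D W S ⊆ S) :
    RuleClosed (Reduct D S) W (Cn (W ∪ consistentGrounded D W S)) := by
  refine ruleClosed_Cn_union ?_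
  rintro _ ⟨d, hd, happ, rfl⟩ hpre
  obtain ⟨F, hFA, hpreF⟩ := exists_finset_of_mem_Cn_union hpre
  obtain ⟨c, hc, hcF⟩ := exists_grounded_eval_iff F fun ψ hψ => (hFA hψ).1
  have hentails : ↑F ⊆ Cn {c} := fun ψ hψ v hv => (hcF v).1 (hv c rfl) ψ hψ
  have hgrounded : Grounded D W (c.conj d.con) :=
    hc.snoc hd (Cn_union_subset_of_subset_Cn hentails hpreF)
  obtain ⟨v, hvS, hvd⟩ := neg_notMem_Cn_iff.1 ((hD d hd).applicable_iff.1 happ)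
  have hvc : c.eval v := (hcF v).2 fun ψ hψ => hvS ψ (hA (hFA hψ))
  have hconsistent : (c.conj d.con).neg ∉ Cn S :=
    neg_notMem_Cn_iff.2 ⟨v, hvS, (eval_conj v c d.con).2 ⟨hvc, hvd⟩⟩
  exact fun u hu => ((eval_conj u c d.con).1 (hu _ (Or.inr ⟨hgrounded, hconsistent⟩))).2

lemma CnRules_reduct_eq (hD : ∀ d ∈ D, d.Normal) (hA : consistentGrounded D W S ⊆ S) :
    CnRules (Reduct D S) W = Cn (W ∪ consistentGrounded D W S) := by
  have hT := ruleClosed_CnRules (Reduct D S) W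
  exact (CnRules_subset (ruleClosed_Cn_union_consistentGrounded hD hA)).antisymm
    (hT.Cn_subset_of_subset (Set.union_subset hT.subset (consistentGrounded_subset hD hT)))

lemma isExtension_iff (hD : ∀ d ∈ D, d.Normal) :
    IsExtension D W S ↔ S = Cn (W ∪ consistentGrounded D W S) := by
  refine ⟨fun hS => ?_, fun hS => ?_⟩
  · have hA := consistentGrounded_subset hD (ruleClosed_CnRules (Reduct D S) W)
    rw [← hS] at hA
    exact hS.trans (CnRules_reduct_eq hD hA)
  · have hA : consistentGrounded D W S ⊆ S :=
      Set.subset_union_right.trans ((subset_Cn _).trans hS.symm.subset)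
    exact hS.trans (CnRules_reduct_eq hD hA).symm

end Grounded

theorem normal_prereq_free_equivalent_general {α : Type}
    (D : Set (Default α)) (W : Set (PropForm α)) (hD : ∀ d ∈ D, d.Normal) :
    ∃ (D' : Set (Default α)) (W' : Set (PropForm α)),
      (∀ d ∈ D', d.Normal ∧ d.PrereqFree) ∧ ext D' W' = ext D W := by
  refine ⟨Default.supernormal '' {c | Grounded D W c}, W, ?_, ?_⟩
  · rintro _ ⟨c, -, rfl⟩
    exact ⟨rfl, top_mem_Cn ∅⟩
  · ext S
    change S = CnRules _ W ↔ IsExtension D W S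
    rw [CnRules_reduct_supernormal, isExtension_iff hD]
    rfl

/-- every normal default theory has an equivalent normal
prerequisite-free default theory. -/
theorem normal_prereq_free_equivalent {α : Type} [Denumerable α]
    (D : Set (Default α)) (W : Set (PropForm α)) (hD : ∀ d ∈ D, d.Normal) :
    ∃ (D' : Set (Default α)) (W' : Set (PropForm α)),
      (∀ d ∈ D', d.Normal ∧ d.PrereqFree) ∧ ext D' W' = ext D W :=
  normal_prereq_free_equivalent_general D W hD
end

section
/- Let φ be a formula and let d_φ be the default φ:∅/⊥ (prerequisite φ, empty set of justifications, consequent the falsum ⊥). For every consistent theory E and every default theory (D,W): E is an extension of (D ∪ {d_φ}, W) if and only if φ ∉ E and E is an extension of (D,W). -/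
lemma cn_mono {α : Type} {S T : Set (PropForm α)} (h : S ⊆ T) : Cn S ⊆ Cn T :=
  fun _ hφ v hv => hφ v (fun ψ hψ => hv ψ (h hψ))

lemma subset_cnRules {α : Type} {B : Set (PropForm α × PropForm α)} {W : Set (PropForm α)} :
    W ⊆ CnRules B W := fun x hx _ hS => hS.1 hx

lemma cnRules_subset {α : Type} {B : Set (PropForm α × PropForm α)} {W S : Set (PropForm α)}
    (h1 : W ⊆ S) (h2 : Cn S ⊆ S) (h3 : ∀ r ∈ B, r.1 ∈ S → r.2 ∈ S) :
    CnRules B W ⊆ S := Set.sInter_subset_of_mem ⟨h1, h2, h3⟩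

lemma cnRules_mem {α : Type} {B : Set (PropForm α × PropForm α)} {W : Set (PropForm α)} :
    CnRules B W ∈ {S | W ⊆ S ∧ Cn S ⊆ S ∧ ∀ r ∈ B, r.1 ∈ S → r.2 ∈ S} := by
  refine ⟨subset_cnRules, ?_, ?_⟩
  · intro χ hχ S hS
    exact hS.2.1 (cn_mono (Set.sInter_subset_of_mem hS) hχ)
  · intro r hr h1 S hS
    exact hS.2.2 r hr (h1 S hS)

lemma cnRules_mono_rules {α : Type} {B B' : Set (PropForm α × PropForm α)}
    {W : Set (PropForm α)} (h : B ⊆ B') : CnRules B W ⊆ CnRules B' W := by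
  intro x hx S hS
  exact hx S ⟨hS.1, hS.2.1, fun r hr => hS.2.2 r (h hr)⟩

lemma fls_incons {α : Type} {E : Set (PropForm α)} (h : PropForm.fls ∈ E) :
    ¬ Consistent E := by
  intro hc
  apply hc
  ext χ
  simp only [Set.mem_univ, iff_true]
  intro v hv
  exact absurd (hv _ h) (fun h => h)

lemma reduct_union {α : Type} (φ : PropForm α) (D : Set (Default α)) (S : Set (PropForm α)) :
    Reduct (D ∪ {⟨φ, ∅, PropForm.fls⟩}) S = Reduct D S ∪ {(φ, PropForm.fls)} := by
  ext r
  constructor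
  · rintro ⟨d, hd, happ, rfl⟩
    rcases hd with hd | hd
    · exact Or.inl ⟨d, hd, happ, rfl⟩
    · rcases hd with rfl
      exact Or.inr rfl
  · rintro (⟨d, hd, happ, rfl⟩ | hr)
    · exact ⟨d, Or.inl hd, happ, rfl⟩
    · rcases hr with rfl
      exact ⟨⟨φ, ∅, PropForm.fls⟩, Or.inr rfl, fun γ hγ => by simp at hγ, rfl⟩

/-- adding the default `φ : ∅ / ⊥` eliminates exactly the extensions
containing `φ`. -/
theorem extension_add_eliminating_default {α : Type} [Denumerable α]
    (φ : PropForm α) (E : Set (PropForm α)) (hE : IsTheory E) (hEcons : Consistent E)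
    (D : Set (Default α)) (W : Set (PropForm α)) :
    IsExtension (D ∪ {⟨φ, ∅, PropForm.fls⟩}) W E ↔ (φ ∉ E ∧ IsExtension D W E) := by
  set B := Reduct D E with hB
  have hred : Reduct (D ∪ {⟨φ, ∅, PropForm.fls⟩}) E = B ∪ {(φ, PropForm.fls)} :=
    reduct_union φ D E
  constructor
  · intro hext
    unfold IsExtension at hext
    rw [hred] at hext
    -- E is a member of the family for B ∪ {(φ,⊥)}
    have hmem := @cnRules_mem α (B ∪ {(φ, PropForm.fls)}) W
    rw [← hext] at hmem
    obtain ⟨hWE, hCnE, hrules⟩ := hmem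
    have hφ : φ ∉ E := by
      intro hφE
      exact fls_incons (hrules (φ, PropForm.fls) (Or.inr rfl) hφE) hEcons
    refine ⟨hφ, ?_⟩
    unfold IsExtension
    apply Set.Subset.antisymm
    · -- E ⊆ CnRules B W : show E ⊆ S for any S in family of B, via S ∩ E
      intro x hxE S hS
      have hsub' : CnRules (B ∪ {(φ, PropForm.fls)}) W ⊆ S ∩ E := by
        apply cnRules_subset
        · exact Set.subset_inter hS.1 hWE
        · intro χ hχ
          exact ⟨hS.2.1 (cn_mono Set.inter_subset_left hχ),
                 hCnE (cn_mono Set.inter_subset_right hχ)⟩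
        · rintro r (hr | hr) h1
          · exact ⟨hS.2.2 r hr h1.1, hrules r (Or.inl hr) h1.2⟩
          · rcases hr with rfl
            exact absurd h1.2 hφ
      have hsub : E ⊆ S ∩ E := Set.Subset.trans hext.subset hsub'
      exact (hsub hxE).1
    · exact cnRules_subset hWE hE (fun r hr => hrules r (Or.inl hr))
  · rintro ⟨hφ, hext⟩
    unfold IsExtension at hext ⊢
    rw [hred]
    apply Set.Subset.antisymm
    · rw [hext]
      exact cnRules_mono_rules Set.subset_union_left
    · apply cnRules_subset
      · rw [hext]; exact subset_cnRules
      · exact hE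
      · rintro r (hr | hr) h1
        · have := (@cnRules_mem α B W).2.2 r hr
          rw [← hext] at this
          exact this h1
        · rcases hr with rfl
          exact absurd h1 hφ
end
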